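/- arXiv:2305.11192 — 5 statements merged into one kernel-verified Lean document; each statement's English description precedes it below -/
import Mathlib

section
/- Let n, t be natural numbers with 1 ≤ t < n, let s : Fin n → ℝ be nonnegative, and call a nonnegative vector v : Fin n → ℝ 'feasible' if for every j ∈ Fin n and every subset A ⊆ Fin n with |A| = t and j ∉ A, one has ∑_{i ∉ A} v i ≥ s j. If v is feasible and v̂ is obtained from v by a permutation of its entries such that v̂ is arranged in the same relative order as s (i.e., v̂ i ≥ v̂ j whenever s i ≥ s j, with v̂ a rearrangement of v), then v̂ is also feasible. -/
/-!
Given `j` and an adversary set `A ∌ j`, pigeonhole on `U = {i | s j ≤ s i}` (as `σ⁻¹ U` cannot fit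
into `U \ {j}`) yields `i` with `s i ≤ s j ≤ s (σ i)`; monotonicity then gives
`v (σ i) ≤ v (σ j)`. The noise of `v ∘ σ` unseen by `A` is the noise of `v` unseen by `σ A`, and
`σ A` misses `σ j`. Feasibility of `v` for party `σ i`, applied to `σ A`, or, if `σ i ∈ σ A`, to
`σ A` with `σ i` exchanged for `σ j` (which can only lower the unseen noise), gives
`s j ≤ s (σ i) ≤ ∑_{i ∉ A} v (σ i)`.
-/

open Finset

theorem Equiv.Perm.exists_le_le_apply {α β : Type*} [Finite α] [LinearOrder β]
    (f : α → β) (σ : Equiv.Perm α) (a : α) : ∃ i, f i ≤ f a ∧ f a ≤ f (σ i) := by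
  classical
  have := Fintype.ofFinite α
  by_contra! h
  let U := {i | f a ≤ f i}.toFinset
  let V := {i | f a < f i}.toFinset
  have hVU : V ⊂ U :=
    ssubset_iff_of_subset (fun i hi ↦ by simp_all [U, V, le_of_lt]) |>.2 ⟨a, by simp [U, V]⟩
  have hUV : #U ≤ #V := by
    refine card_le_card_of_injOn σ.symm (fun i hi ↦ ?_) σ.symm.injective.injOn
    simp only [U, V, Set.coe_toFinset, Set.mem_ofPred_eq] at hi ⊢
    exact lt_of_not_ge fun hle ↦ (h _ hle).not_ge (by simpa using hi)
  exact (card_lt_card hVU).not_ge hUV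

section Feasible

variable {α M : Type*} [Fintype α] [DecidableEq α]

def Feasible [AddCommMonoid M] [LE M] (t : ℕ) (s v : α → M) : Prop :=
  ∀ (j : α) (A : Finset α), #A = t → j ∉ A → s j ≤ ∑ i ∈ Aᶜ, v i

theorem Feasible.le_sum_compl_of_le [AddCommMonoid M] [PartialOrder M]
    [IsOrderedCancelAddMonoid M] {t : ℕ} {s v : α → M} (hv : Feasible t s v)
    {A : Finset α} (hA : #A = t) {j k : α} (hk : k ∉ A) (hjk : v j ≤ v k) :
    s j ≤ ∑ i ∈ Aᶜ, v i := by
  refine (em (j ∈ A)).elim (fun hjA ↦ ?_) (hv j A hA)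
  set A' := insert k (A.erase j)
  have hkA' : k ∉ A.erase j := fun h ↦ hk (mem_of_mem_erase h)
  have hA' : #A' = t := by
    rw [card_insert_of_notMem hkA', card_erase_of_mem hjA, hA]
    have := card_pos.2 ⟨j, hjA⟩
    omega
  have hjA' : j ∉ A' := by simp [A', ne_of_mem_of_not_mem hjA hk]
  have hsum : ∑ i ∈ A'ᶜ, v i + v k = ∑ i ∈ Aᶜ, v i + v j := by
    have h := (sum_compl_add_sum A' v).trans (sum_compl_add_sum A v).symm
    rw [sum_insert hkA', ← add_sum_erase A v hjA, ← add_assoc, ← add_assoc] at h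
    exact add_right_cancel h
  refine (hv j A' hA' hjA').trans (le_of_add_le_add_right (a := v k) ?_)
  rw [hsum]
  exact add_le_add_right hjk _

theorem Feasible.comp_perm [AddCommMonoid M] [LinearOrder M] [IsOrderedCancelAddMonoid M]
    {t : ℕ} {s v : α → M} (hv : Feasible t s v) (σ : Equiv.Perm α)
    (hmono : ∀ i j, s j ≤ s i → v (σ j) ≤ v (σ i)) : Feasible t s (v ∘ σ) := by
  intro j A hA hjA
  obtain ⟨i, hij, hji⟩ := σ.exists_le_le_apply s j
  have hreindex : ∑ i ∈ Aᶜ, (v ∘ σ) i = ∑ i ∈ (A.map σ.toEmbedding)ᶜ, v i :=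
    sum_equiv σ (by simp) (fun _ _ ↦ rfl)
  calc s j ≤ s (σ i) := hji
    _ ≤ ∑ i ∈ (A.map σ.toEmbedding)ᶜ, v i :=
      hv.le_sum_compl_of_le (by simpa using hA) (by simpa using hjA) (hmono j i hij)
    _ = ∑ i ∈ Aᶜ, (v ∘ σ) i := hreindex.symm

end Feasible

theorem stmt0_general (n t : ℕ)
    (s v : Fin n → ℝ)
    (hfeas : ∀ (j : Fin n) (A : Finset (Fin n)), A.card = t → j ∉ A →
      s j ≤ ∑ i ∈ Aᶜ, v i)
    (σ : Equiv.Perm (Fin n)) (vh : Fin n → ℝ) (hperm : vh = v ∘ σ)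
    (hmono : ∀ i j : Fin n, s j ≤ s i → vh j ≤ vh i) :
    ∀ (j : Fin n) (A : Finset (Fin n)), A.card = t → j ∉ A →
      s j ≤ ∑ i ∈ Aᶜ, vh i := by
  subst hperm
  exact Feasible.comp_perm hfeas σ hmono

theorem stmt0 (n t : ℕ) (ht : 1 ≤ t) (htn : t < n)
    (s v : Fin n → ℝ) (hs : ∀ i, 0 ≤ s i) (hv : ∀ i, 0 ≤ v i)
    (hfeas : ∀ (j : Fin n) (A : Finset (Fin n)), A.card = t → j ∉ A →
      s j ≤ ∑ i ∈ Aᶜ, v i)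
    (σ : Equiv.Perm (Fin n)) (vh : Fin n → ℝ) (hperm : vh = v ∘ σ)
    (hmono : ∀ i j : Fin n, s j ≤ s i → vh j ≤ vh i) :
    ∀ (j : Fin n) (A : Finset (Fin n)), A.card = t → j ∉ A →
      s j ≤ ∑ i ∈ Aᶜ, vh i :=
  stmt0_general n t s v hfeas σ vh hperm hmono
end

section
/- Let n, t be natural numbers with 1 ≤ t < n−1, let s : Fin n → ℝ be nonnegative and nonincreasing (s i ≥ s j for i ≤ j), and let v : Fin n → ℝ be nonnegative and nonincreasing. Then v is feasible (i.e., for every j and every t-element subset A with j ∉ A, ∑_{i ∉ A} v i ≥ s j) if and only if for every j ≤ t+1 (1-indexed), v j + ∑_{i=t+2}^{n} v i ≥ s j. -/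
/-- For a strictly monotone map `f : Fin m → Fin n`, adding `d` steps in the
domain adds at least `d` in the codomain value. -/
private lemma strictMono_add_le {m n : ℕ} (f : Fin m → Fin n) (hf : StrictMono f) :
    ∀ d : ℕ, ∀ a b : Fin m, b.val = a.val + d → (f a).val + d ≤ (f b).val := by
  intro d
  induction d with
  | zero =>
    intro a b hab
    have : a = b := Fin.ext (by omega)
    subst this; simp
  | succ d ih =>
    intro a b hab
    have hb' : a.val + d < m := by omega
    have h1 := ih a ⟨a.val + d, hb'⟩ rfl
    have h2 : f ⟨a.val + d, hb'⟩ < f b := hf (by simp [Fin.lt_def]; omega)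
    have := Fin.lt_def.mp h2
    omega

private lemma strictMono_upper {m n : ℕ} (f : Fin m → Fin n) (hf : StrictMono f)
    (k : Fin m) : (f k).val ≤ n - m + k.val := by
  have hm : 1 ≤ m := Nat.one_le_iff_ne_zero.mpr (by rintro rfl; exact k.elim0)
  have hlast : m - 1 < m := by omega
  have h1 := strictMono_add_le f hf (m - 1 - k.val) k ⟨m - 1, hlast⟩ (by simp; omega)
  have h2 : (f ⟨m - 1, hlast⟩).val < n := (f _).isLt
  have h6 := strictMono_add_le f hf k.val ⟨0, by omega⟩ k (by simp)
  have hk := k.isLt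
  omega

/-- Sum over any finset `B` of an antitone nonneg function dominates the sum over the
`B.card` largest indices. -/
private lemma tail_sum_le {n : ℕ} (v : Fin n → ℝ)
    (hvmono : ∀ i j : Fin n, i ≤ j → v j ≤ v i) (B : Finset (Fin n)) :
    ∑ i ∈ Finset.univ.filter (fun i : Fin n => n - B.card ≤ i.val), v i ≤ ∑ i ∈ B, v i := by
  set m := B.card with hm
  have hmn : m ≤ n := by
    calc m = B.card := rfl
    _ ≤ Finset.univ.card := Finset.card_le_card (Finset.subset_univ B)
    _ = n := by simp
  set f := B.orderEmbOfFin hm.symm with hfdef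
  have hfmono : StrictMono f := f.strictMono
  -- define g
  have hg : ∀ k : Fin m, n - m + k.val < n := fun k => by have := k.isLt; omega
  set g : Fin m → Fin n := fun k => ⟨n - m + k.val, hg k⟩ with hgdef
  have hginj : Function.Injective g := by
    intro a b hab
    have : n - m + a.val = n - m + b.val := congrArg Fin.val hab
    exact Fin.ext (by omega)
  have hB : B = Finset.image f Finset.univ := by
    ext i
    simp only [Finset.mem_image, Finset.mem_univ, true_and]
    constructor
    · intro hi
      have : i ∈ Set.range f := by
        rw [Finset.range_orderEmbOfFin]; exact hi
      exact this
    · rintro ⟨k, rfl⟩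
      exact Finset.orderEmbOfFin_mem B hm.symm k
  have hT : Finset.univ.filter (fun i : Fin n => n - m ≤ i.val) = Finset.image g Finset.univ := by
    ext i
    simp only [Finset.mem_filter, Finset.mem_univ, true_and, Finset.mem_image]
    constructor
    · intro hi
      refine ⟨⟨i.val - (n - m), by omega⟩, ?_⟩
      exact Fin.ext (by simp [hgdef]; omega)
    · rintro ⟨k, rfl⟩
      simp [hgdef]
  rw [hT, Finset.sum_image (fun a _ b _ h => hginj h)]
  conv_rhs => rw [hB, Finset.sum_image (fun a _ b _ h => f.injective h)]
  apply Finset.sum_le_sum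
  intro k _
  apply hvmono
  have := strictMono_upper f hfmono k
  exact Fin.le_def.mpr (by simp [hgdef]; omega)

theorem stmt1 (n t : ℕ) (ht : 1 ≤ t) (htn : t + 1 < n)
    (s : Fin n → ℝ) (hs0 : ∀ i, 0 ≤ s i)
    (hsmono : ∀ i j : Fin n, i ≤ j → s j ≤ s i)
    (v : Fin n → ℝ) (hv0 : ∀ i, 0 ≤ v i)
    (hvmono : ∀ i j : Fin n, i ≤ j → v j ≤ v i) :
    (∀ (j : Fin n) (A : Finset (Fin n)), A.card = t → j ∉ A →
        s j ≤ ∑ i ∈ Aᶜ, v i) ↔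
    (∀ j : Fin n, j.val ≤ t →
        s j ≤ v j + ∑ i ∈ Finset.univ.filter (fun i : Fin n => t + 1 ≤ i.val), v i) := by
  have hcard_le : (Finset.univ.filter (fun i : Fin n => i.val ≤ t)).card = t + 1 := by
    have : Finset.univ.filter (fun i : Fin n => i.val ≤ t)
        = Finset.image (Fin.castLE (by omega : t + 1 ≤ n)) Finset.univ := by
      ext i
      simp only [Finset.mem_filter, Finset.mem_univ, true_and, Finset.mem_image]
      constructor
      · intro hi
        exact ⟨⟨i.val, by omega⟩, Fin.ext rfl⟩
      · rintro ⟨k, rfl⟩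
        have := k.isLt
        simpa [Fin.castLE] using by omega
    rw [this, Finset.card_image_of_injective _ (Fin.castLE_injective _)]
    simp
  constructor
  · -- forward
    intro H j hj
    set A := (Finset.univ.filter (fun i : Fin n => i.val ≤ t)).erase j with hA
    have hjmem : j ∈ Finset.univ.filter (fun i : Fin n => i.val ≤ t) := by
      simp [hj]
    have hAcard : A.card = t := by
      rw [hA, Finset.card_erase_of_mem hjmem, hcard_le]
      omega
    have hjA : j ∉ A := Finset.notMem_erase _ _
    have hH := H j A hAcard hjA
    have hcompl : Aᶜ = insert j (Finset.univ.filter (fun i : Fin n => t + 1 ≤ i.val)) := by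
      ext i
      simp only [Finset.mem_compl, hA, Finset.mem_erase, Finset.mem_filter, Finset.mem_univ,
        true_and, Finset.mem_insert, not_and, not_le]
      constructor
      · intro h
        by_cases hij : i = j
        · exact Or.inl hij
        · exact Or.inr (h hij)
      · rintro (rfl | h)
        · intro h'; exact absurd rfl h'
        · intro _; omega
    rw [hcompl, Finset.sum_insert (by simp; omega)] at hH
    exact hH
  · -- backward
    intro H j A hAcard hjA
    have hAc_card : Aᶜ.card = n - t := by
      rw [Finset.card_compl, hAcard]; simp
    by_cases hj : j.val ≤ t
    · -- j small: use Aᶜ.erase j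
      set B := Aᶜ.erase j with hB
      have hjAc : j ∈ Aᶜ := Finset.mem_compl.mpr hjA
      have hBcard : B.card = n - t - 1 := by
        rw [hB, Finset.card_erase_of_mem hjAc, hAc_card]
      have hkey := tail_sum_le v hvmono B
      rw [hBcard] at hkey
      have hnn : n - (n - t - 1) = t + 1 := by omega
      rw [hnn] at hkey
      have hsum : ∑ i ∈ Aᶜ, v i = v j + ∑ i ∈ B, v i := by
        rw [hB, ← Finset.sum_erase_add _ _ hjAc]; ring
      calc s j ≤ v j + ∑ i ∈ Finset.univ.filter (fun i : Fin n => t + 1 ≤ i.val), v i :=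
            H j hj
        _ ≤ v j + ∑ i ∈ B, v i := by linarith
        _ = ∑ i ∈ Aᶜ, v i := hsum.symm
    · -- j large
      push_neg at hj
      set j' : Fin n := ⟨t, by omega⟩ with hj'
      have hsj : s j ≤ s j' := hsmono j' j (Fin.le_def.mpr (by simp [hj']; omega))
      have hH := H j' (by simp [hj'])
      have hkey := tail_sum_le v hvmono Aᶜ
      rw [hAc_card] at hkey
      have hnn : n - (n - t) = t := by omega
      rw [hnn] at hkey
      have hsplit : Finset.univ.filter (fun i : Fin n => t ≤ i.val)
          = insert j' (Finset.univ.filter (fun i : Fin n => t + 1 ≤ i.val)) := by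
        ext i
        simp only [Finset.mem_filter, Finset.mem_univ, true_and, Finset.mem_insert]
        constructor
        · intro h
          by_cases hij : i = j'
          · exact Or.inl hij
          · right
            have : i.val ≠ t := fun hh => hij (Fin.ext (by simp [hj', hh]))
            omega
        · rintro (rfl | h)
          · simp [hj']
          · omega
      rw [hsplit, Finset.sum_insert (by simp [hj'])] at hkey
      linarith
end

section
/- Let n, t with 1 ≤ t < n−1, s : Fin n → ℝ nonnegative nonincreasing. Suppose v : Fin n → ℝ is nonnegative, nonincreasing, feasible (for every j and every t-subset A with j ∉ A, ∑_{i∉A} v i ≥ s j), and minimizes the total sum ∑_i v i among all such feasible nonincreasing nonnegative vectors. Then v_{t+1} = v_{t+2} = ⋯ = v_n (all entries with index ≥ t+1, 1-indexed, are equal). -/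
set_option maxHeartbeats 1000000 in
theorem stmt2 (n t : ℕ) (ht : 1 ≤ t) (htn : t + 1 < n)
    (s : Fin n → ℝ) (hs0 : ∀ i, 0 ≤ s i)
    (hsmono : ∀ i j : Fin n, i ≤ j → s j ≤ s i)
    (v : Fin n → ℝ) (hv0 : ∀ i, 0 ≤ v i)
    (hvmono : ∀ i j : Fin n, i ≤ j → v j ≤ v i)
    (hfeas : ∀ (j : Fin n) (A : Finset (Fin n)), A.card = t → j ∉ A →
      s j ≤ ∑ i ∈ Aᶜ, v i)
    (hopt : ∀ w : Fin n → ℝ, (∀ i, 0 ≤ w i) →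
      (∀ i j : Fin n, i ≤ j → w j ≤ w i) →
      (∀ (j : Fin n) (A : Finset (Fin n)), A.card = t → j ∉ A →
        s j ≤ ∑ i ∈ Aᶜ, w i) →
      ∑ i, v i ≤ ∑ i, w i) :
    ∀ i j : Fin n, t ≤ i.val → t ≤ j.val → v i = v j := by
  classical
  have htn' : t < n := by omega
  set tI : Fin n := ⟨t, htn'⟩ with htI
  have hlast : n - 1 < n := by omega
  set lI : Fin n := ⟨n - 1, hlast⟩ with hlI
  have htIval : tI.val = t := rfl
  have hlIval : lI.val = n - 1 := rfl
  have key : v tI = v lI := by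
    by_contra hne
    have htl : tI ≤ lI := by
      rw [Fin.le_def, htIval, hlIval]; omega
    have hlt : v lI < v tI := lt_of_le_of_ne (hvmono tI lI htl) (fun h => hne h.symm)
    set m : ℕ := n - t with hm
    have hm2 : 2 ≤ m := by omega
    have hmR : (0:ℝ) < (m:ℝ) := by exact_mod_cast (by omega : 0 < m)
    obtain ⟨T, hT⟩ : ∃ x : ℝ, x = ∑ i ∈ Finset.Ici tI, v i := ⟨_, rfl⟩
    have hTlcard : (Finset.Ici tI).card = m := by rw [Fin.card_Ici, htIval]
    have hT0 : 0 ≤ T := hT ▸ Finset.sum_nonneg fun i _ => hv0 i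
    obtain ⟨c, hc⟩ : ∃ x : ℝ, x = T / m := ⟨_, rfl⟩
    have hc0 : 0 ≤ c := by rw [hc]; exact div_nonneg hT0 hmR.le
    have hTlt : T < m * v tI := by
      have hlmem : lI ∈ Finset.Ici tI := Finset.mem_Ici.mpr htl
      have h2 := Finset.sum_lt_sum (s := Finset.Ici tI) (f := v) (g := fun _ => v tI)
        (fun i hi => hvmono tI i (Finset.mem_Ici.mp hi)) ⟨lI, hlmem, hlt⟩
      rw [Finset.sum_const, hTlcard, nsmul_eq_mul] at h2
      rw [hT]; exact h2
    have hclt : c < v tI := by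
      rw [hc, div_lt_iff₀ hmR]; linarith
    obtain ⟨δ, hδ⟩ : ∃ x : ℝ, x = v tI - c := ⟨_, rfl⟩
    have hδpos : 0 < δ := by rw [hδ]; linarith
    obtain ⟨w, hw⟩ : ∃ w : Fin n → ℝ,
        w = fun i => if i.val + 1 < t then v i else if i.val < t then v i - δ else c := ⟨_, rfl⟩
    -- monotonicity of w
    have hwmono : ∀ a b : Fin n, a ≤ b → w b ≤ w a := by
      intro a b hab
      have hab' : a.val ≤ b.val := hab
      have hva : v b ≤ v a := hvmono a b hab
      have hvta : a.val < t → v tI ≤ v a := fun h =>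
        hvmono a tI (by rw [Fin.le_def, htIval]; omega)
      simp only [hw]
      split_ifs with h1 h2 h3 h4 h5 h6 <;>
        first
          | linarith [hvta (by omega)]
          | omega
          | linarith
    have hw0 : ∀ i, 0 ≤ w i := by
      intro i
      have hvti : i.val < t → v tI ≤ v i := fun h =>
        hvmono i tI (by rw [Fin.le_def, htIval]; omega)
      simp only [hw]
      split_ifs with h1 h2 <;>
        first
          | linarith [hvti (by omega)]
          | linarith [hv0 i]
    -- tail sum of w
    have hmc : (m:ℝ) * c = T := by rw [hc]; field_simp
    have hwtail : ∑ i ∈ Finset.Ici tI, w i = T := by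
      have hcongr : ∀ i ∈ Finset.Ici tI, w i = c := by
        intro i hi
        have hti : t ≤ i.val := by
          have h := Finset.mem_Ici.mp hi
          rw [Fin.le_def, htIval] at h; exact h
        simp only [hw]
        rw [if_neg (by omega), if_neg (by omega)]
      rw [Finset.sum_congr rfl hcongr, Finset.sum_const, hTlcard, nsmul_eq_mul, hmc]
    -- head sum of w
    have htm1 : t - 1 < n := by omega
    set sI : Fin n := ⟨t - 1, htm1⟩ with hsI
    have hsIval : sI.val = t - 1 := rfl
    have hsImem : sI ∈ Finset.Iio tI := Finset.mem_Iio.mpr (by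
      rw [Fin.lt_def, htIval, hsIval]; omega)
    have hwhead : ∑ i ∈ Finset.Iio tI, w i = (∑ i ∈ Finset.Iio tI, v i) - δ := by
      have h1 : ∀ i ∈ Finset.Iio tI, w i = v i + (if i = sI then -δ else 0) := by
        intro i hi
        have hit : i.val < t := by
          have h := Finset.mem_Iio.mp hi
          rw [Fin.lt_def, htIval] at h; exact h
        by_cases h2 : i = sI
        · have hival : i.val = t - 1 := by rw [h2, hsIval]
          simp only [hw]
          rw [if_neg (by omega), if_pos (by omega), if_pos h2]
          ring
        · have hiv : i.val + 1 < t := by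
            rcases Nat.lt_or_ge (i.val + 1) t with h | h
            · exact h
            · exact absurd (Fin.ext (by omega : i.val = sI.val)) h2
          simp only [hw]
          rw [if_pos hiv, if_neg h2]
          ring
      rw [Finset.sum_congr rfl h1, Finset.sum_add_distrib,
        Finset.sum_ite_eq' (Finset.Iio tI) sI (fun _ => -δ), if_pos hsImem]
      ring
    have hcomplIio : (Finset.Iio tI)ᶜ = Finset.Ici tI := by
      ext x; simp [not_lt]
    have hsplit : ∀ f : Fin n → ℝ,
        ∑ i, f i = ∑ i ∈ Finset.Iio tI, f i + ∑ i ∈ Finset.Ici tI, f i := by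
      intro f
      rw [← hcomplIio, Finset.sum_add_sum_compl]
    have hsum : ∑ i, w i = (∑ i, v i) - δ := by
      rw [hsplit w, hsplit v, hwhead, hwtail, ← hT]
      ring
    -- the key feasibility claim
    have claim : ∀ k : ℕ, ∀ j : Fin n, ∀ C : Finset (Fin n),
        (∑ i ∈ Cᶜ, i.val) = k → j ∈ C → C.card = m → s j ≤ ∑ i ∈ C, w i := by
      intro k
      induction k using Nat.strong_induction_on with
      | _ k IH =>
        intro j C hμ hjC hCcard
        by_cases hex : ∃ a ∈ C, a ≠ j ∧ ∃ b, b ∉ C ∧ a < b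
        · obtain ⟨a, haC, haj, b, hbC, hab⟩ := hex
          have habne : a ≠ b := ne_of_lt hab
          have hbne : b ∉ C.erase a := fun h => hbC (Finset.mem_of_mem_erase h)
          set C' := insert b (C.erase a) with hC'
          have hjC' : j ∈ C' :=
            Finset.mem_insert_of_mem (Finset.mem_erase.mpr ⟨fun h => haj h.symm, hjC⟩)
          have hcard' : C'.card = m := by
            rw [hC', Finset.card_insert_of_notMem hbne, Finset.card_erase_of_mem haC, hCcard]
            omega
          have hbCc : b ∈ Cᶜ := Finset.mem_compl.mpr hbC
          have haCc : a ∉ Cᶜ.erase b := fun h =>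
            (Finset.mem_compl.mp (Finset.mem_of_mem_erase h)) haC
          have hcompl : C'ᶜ = insert a (Cᶜ.erase b) := by
            ext x
            simp only [hC', Finset.mem_compl, Finset.mem_insert, Finset.mem_erase]
            push_neg
            constructor
            · rintro ⟨hxb, hx⟩
              by_cases hxa : x = a
              · exact Or.inl hxa
              · exact Or.inr ⟨hxb, hx hxa⟩
            · rintro (rfl | ⟨hxb, hx⟩)
              · exact ⟨habne, fun h => absurd rfl h⟩
              · exact ⟨hxb, fun _ => hx⟩
          have hμ' : (∑ i ∈ C'ᶜ, i.val) < k := by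
            have e1 : b.val + ∑ i ∈ Cᶜ.erase b, i.val = ∑ i ∈ Cᶜ, i.val :=
              Finset.add_sum_erase _ _ hbCc
            rw [hcompl, Finset.sum_insert haCc]
            have hab2 : a.val < b.val := hab
            omega
          have hrec := IH _ hμ' j C' rfl hjC' hcard'
          have hstep : ∑ i ∈ C', w i ≤ ∑ i ∈ C, w i := by
            rw [hC', Finset.sum_insert hbne, ← Finset.add_sum_erase C w haC]
            have := hwmono a b (le_of_lt hab)
            linarith
          linarith
        · push_neg at hex
          have hstepA : ∀ b : Fin n, b ∉ C → b.val ≤ t := by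
            intro b hb
            have hsub : C.erase j ⊆ Finset.Ioi b := by
              intro a ha
              obtain ⟨haj, haC⟩ := Finset.mem_erase.mp ha
              have h1 : b ≤ a := hex a haC haj b hb
              have h2 : a ≠ b := fun h => hb (h ▸ haC)
              exact Finset.mem_Ioi.mpr (lt_of_le_of_ne h1 (Ne.symm h2))
            have hc1 := Finset.card_le_card hsub
            rw [Finset.card_erase_of_mem hjC, hCcard, Fin.card_Ioi] at hc1
            have := b.isLt
            omega
          have hCc_card : Cᶜ.card = t := by
            rw [Finset.card_compl, hCcard, Fintype.card_fin]
            omega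
          have hsubB : Cᶜ ⊆ Finset.Iic tI := by
            intro b hb
            exact Finset.mem_Iic.mpr (by
              rw [Fin.le_def, htIval]
              exact hstepA b (Finset.mem_compl.mp hb))
          have hdiff : (Finset.Iic tI \ Cᶜ).card = 1 := by
            rw [Finset.card_sdiff_of_subset hsubB, Fin.card_Iic, hCc_card, htIval]
            omega
          obtain ⟨x, hx⟩ := Finset.card_eq_one.mp hdiff
          by_cases hj : t ≤ j.val
          · -- tail constraint : C = Ici tI
            have htInotin : tI ∉ Cᶜ := by
              intro htIc
              have hxmem : x ∈ Finset.Iic tI \ Cᶜ := hx ▸ Finset.mem_singleton_self x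
              obtain ⟨hxIic, hxCc⟩ := Finset.mem_sdiff.mp hxmem
              have hxC : x ∈ C := by
                by_contra hxC
                exact hxCc (Finset.mem_compl.mpr hxC)
              have hxt : x ≠ tI := fun h => hxCc (h ▸ htIc)
              have hxval : x.val < t := by
                have hxle : x.val ≤ t := by
                  have h := Finset.mem_Iic.mp hxIic
                  rw [Fin.le_def, htIval] at h; exact h
                rcases Nat.lt_or_ge x.val t with h | h
                · exact h
                · exact absurd (Fin.ext (by rw [htIval]; omega : x.val = tI.val)) hxt
              have hxj : x ≠ j := fun h => by rw [h] at hxval; omega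
              have h := hex x hxC hxj tI (Finset.mem_compl.mp htIc)
              rw [Fin.le_def, htIval] at h
              omega
            have hxtI : x = tI := by
              have htImem : tI ∈ Finset.Iic tI \ Cᶜ :=
                Finset.mem_sdiff.mpr ⟨Finset.mem_Iic.mpr le_rfl, htInotin⟩
              rw [hx] at htImem
              exact (Finset.mem_singleton.mp htImem).symm
            have hCc : Cᶜ = Finset.Iio tI := by
              ext y
              constructor
              · intro hy
                have hyIic := hsubB hy
                have hyt : y ≠ tI := fun h => htInotin (h ▸ hy)
                exact Finset.mem_Iio.mpr (lt_of_le_of_ne (Finset.mem_Iic.mp hyIic) hyt)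
              · intro hy
                by_contra hyC
                have hmem : y ∈ Finset.Iic tI \ Cᶜ :=
                  Finset.mem_sdiff.mpr ⟨Finset.mem_Iic.mpr (le_of_lt (Finset.mem_Iio.mp hy)), hyC⟩
                rw [hx, hxtI] at hmem
                exact absurd (Finset.mem_singleton.mp hmem) (ne_of_lt (Finset.mem_Iio.mp hy))
            have hC : C = Finset.Ici tI := by
              rw [← compl_compl C, hCc, hcomplIio]
            have hjA : j ∉ Finset.Iio tI := by
              intro h
              have h2 := Finset.mem_Iio.mp h
              rw [Fin.lt_def, htIval] at h2
              omega
            have hfj := hfeas j (Finset.Iio tI) (by rw [Fin.card_Iio, htIval]) hjA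
            rw [hcomplIio, ← hT] at hfj
            rw [hC, hwtail]
            exact hfj
          · -- head constraint : Cᶜ = (Iic tI).erase j
            push_neg at hj
            have hxj : x = j := by
              have hjmem : j ∈ Finset.Iic tI \ Cᶜ := Finset.mem_sdiff.mpr
                ⟨Finset.mem_Iic.mpr (by rw [Fin.le_def, htIval]; omega),
                 fun h => (Finset.mem_compl.mp h) hjC⟩
              rw [hx] at hjmem
              exact (Finset.mem_singleton.mp hjmem).symm
            have hCc : Cᶜ = (Finset.Iic tI).erase j := by
              ext y
              constructor
              · intro hy
                exact Finset.mem_erase.mpr ⟨fun h => (Finset.mem_compl.mp hy) (h ▸ hjC), hsubB hy⟩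
              · intro hy
                obtain ⟨hyj, hyIic⟩ := Finset.mem_erase.mp hy
                by_contra hyC
                have hmem : y ∈ Finset.Iic tI \ Cᶜ := Finset.mem_sdiff.mpr ⟨hyIic, hyC⟩
                rw [hx, hxj] at hmem
                exact hyj (Finset.mem_singleton.mp hmem)
            have hjIic : j ∈ Finset.Iic tI :=
              Finset.mem_Iic.mpr (by rw [Fin.le_def, htIval]; omega)
            have hA0card : ((Finset.Iic tI).erase j).card = t := by
              rw [Finset.card_erase_of_mem hjIic, Fin.card_Iic, htIval]
              omega
            have hfj := hfeas j ((Finset.Iic tI).erase j) hA0card (Finset.notMem_erase j _)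
            rw [← hCc, compl_compl] at hfj
            have hsumCv : ∑ i ∈ Cᶜ, v i = (∑ i ∈ Finset.Iic tI, v i) - v j := by
              rw [hCc, eq_sub_iff_add_eq]
              exact Finset.sum_erase_add _ _ hjIic
            have hsumCw : ∑ i ∈ Cᶜ, w i = (∑ i ∈ Finset.Iic tI, w i) - w j := by
              rw [hCc, eq_sub_iff_add_eq]
              exact Finset.sum_erase_add _ _ hjIic
            have hCv := Finset.sum_add_sum_compl C v
            have hCw := Finset.sum_add_sum_compl C w
            have hIicv : ∑ i ∈ Finset.Iic tI, v i = (∑ i ∈ Finset.Iio tI, v i) + v tI := by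
              rw [← Finset.Iio_insert, Finset.sum_insert Finset.notMem_Iio_self]
              ring
            have hIicw : ∑ i ∈ Finset.Iic tI, w i = (∑ i ∈ Finset.Iio tI, w i) + w tI := by
              rw [← Finset.Iio_insert, Finset.sum_insert Finset.notMem_Iio_self]
              ring
            have hwtI : w tI = c := by
              simp only [hw]
              rw [if_neg (by omega), if_neg (by omega)]
            have hwdef : w j = if j.val + 1 < t then v j else if j.val < t then v j - δ else c := by
              rw [hw]
            have hwj : v j - v tI ≤ w j - c := by
              rw [hwdef]
              by_cases h1 : j.val + 1 < t
              · rw [if_pos h1]; linarith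
              · rw [if_neg h1, if_pos hj, hδ]; linarith
            have hsplitv := hsplit v
            have hsplitw := hsplit w
            linarith [hT, hsum, hδ]
    -- conclude
    have hwfeas : ∀ (j : Fin n) (A : Finset (Fin n)), A.card = t → j ∉ A →
        s j ≤ ∑ i ∈ Aᶜ, w i := by
      intro j A hA hjA
      refine claim _ j Aᶜ rfl (Finset.mem_compl.mpr hjA) ?_
      rw [Finset.card_compl, hA, Fintype.card_fin]
    have hle := hopt w hw0 hwmono hwfeas
    rw [hsum] at hle
    linarith
  intro i j hi hj
  have hiv : v i = v tI := by
    have h1 : v i ≤ v tI := hvmono tI i (by rw [Fin.le_def, htIval]; omega)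
    have h2 : v lI ≤ v i := hvmono i lI (by rw [Fin.le_def, hlIval]; omega)
    rw [← key] at h2
    linarith
  have hjv : v j = v tI := by
    have h1 : v j ≤ v tI := hvmono tI j (by rw [Fin.le_def, htIval]; omega)
    have h2 : v lI ≤ v j := hvmono j lI (by rw [Fin.le_def, hlIval]; omega)
    rw [← key] at h2
    linarith
  rw [hiv, hjv]
end

section
/- Let n, t with 1 ≤ t < n−1, s : Fin n → ℝ nonnegative nonincreasing. Suppose v : Fin n → ℝ is nonnegative, nonincreasing, feasible, and minimizes ∑_i v i among feasible nonincreasing nonnegative vectors. Then for every j ≤ t (1-indexed), if v j > v_{j+1}, the constraint for party j is tight: v j + ∑_{i=t+2}^{n} v i = s j. -/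
/-!
For a nonincreasing `v`, the worst coalition `A` against party `j` removes the largest entries
other than `v j`, so feasibility reduces to the explicit constraints `v j + ∑_{i > t} v i ≥ s j`
for `j ≤ t` and `∑_{i ≥ t} v i ≥ s j` for `j > t`. If the constraint of some `j < t` with
`v (j + 1) < v j` were slack, lowering `v j` a little would keep `v` nonincreasing, nonnegative
and feasible (the other constraints do not involve `v j`) while decreasing `∑ i, v i`.
-/

open Finset

theorem Antitone.sum_le_sum_of_card_eq {ι M : Type*} [Preorder ι] [AddCommMonoid M]
    [PartialOrder M] [IsOrderedAddMonoid M] {f : ι → M} (hf : Antitone f) {S B : Finset ι}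
    (hcard : #S = #B) {c : ι} (hS : ∀ i ∈ S, c ≤ i) (hB : ∀ j ∈ B, j ∉ S → j ≤ c) :
    ∑ i ∈ S, f i ≤ ∑ i ∈ B, f i := by
  classical
  have hout : ∑ i ∈ S \ B, f i ≤ ∑ i ∈ B \ S, f i :=
    calc ∑ i ∈ S \ B, f i ≤ #(S \ B) • f c :=
          sum_le_card_nsmul _ _ _ fun i hi ↦ hf (hS i (mem_sdiff.1 hi).1)
      _ = #(B \ S) • f c := by rw [card_sdiff_comm hcard]
      _ ≤ ∑ i ∈ B \ S, f i :=
          card_nsmul_le_sum _ _ _ fun j hj ↦ hf (hB j (mem_sdiff.1 hj).1 (mem_sdiff.1 hj).2)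
  rw [← sum_inter_add_sum_sdiff S B, ← sum_inter_add_sum_sdiff B S, inter_comm]
  gcongr

theorem Antitone.update_of_le_of_le {ι α : Type*} [LinearOrder ι] [DecidableEq ι] [Preorder α]
    {f : ι → α} (hf : Antitone f) {j k : ι} (hk : ∀ i, j < i → k ≤ i) {x : α}
    (hxj : x ≤ f j) (hkx : f k ≤ x) : Antitone (Function.update f j x) := by
  intro a b hab
  rcases eq_or_ne a j with rfl | ha <;> rcases eq_or_ne b a with rfl | hb
  · rfl
  · rw [Function.update_self, Function.update_of_ne hb]
    exact (hf (hk b (lt_of_le_of_ne hab hb.symm))).trans hkx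
  · rfl
  · rw [Function.update_of_ne ha]
    rcases eq_or_ne b j with rfl | hbj
    · rw [Function.update_self]
      exact hxj.trans (hf hab)
    · rw [Function.update_of_ne hbj]
      exact hf hab

def IsFeasible {n : ℕ} (t : ℕ) (s v : Fin n → ℝ) : Prop :=
  ∀ (j : Fin n) (A : Finset (Fin n)), #A = t → j ∉ A → s j ≤ ∑ i ∈ Aᶜ, v i

theorem isFeasible_iff {n : ℕ} {s v : Fin n → ℝ} (hv : Antitone v) (T : Fin n) :
    IsFeasible T s v ↔
      (∀ j ≤ T, s j ≤ v j + ∑ i ∈ Ioi T, v i) ∧ ∀ j, T < j → s j ≤ ∑ i ∈ Ici T, v i := by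
  refine ⟨fun h ↦ ⟨fun j hj ↦ ?_, fun j hj ↦ ?_⟩, fun ⟨hle, hgt⟩ j A hA hjA ↦ ?_⟩
  · have hcompl : ((Iic T).erase j)ᶜ = insert j (Ioi T) := by
      ext i
      simp only [mem_compl, mem_erase, mem_Iic, mem_insert, mem_Ioi]
      grind
    have := h j ((Iic T).erase j) (by simp [card_erase_of_mem, hj]) (by simp)
    rwa [hcompl, sum_insert (by simpa using hj)] at this
  · have := h j (Iio T) (Fin.card_Iio T) (by simpa using hj.le)
    rwa [show (Iio T)ᶜ = Ici T by ext; simp] at this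
  · have hcard : #Aᶜ = n - T := by rw [card_compl, hA, Fintype.card_fin]
    have hjc : j ∈ Aᶜ := mem_compl.2 hjA
    rcases le_or_gt j T with hj | hj
    · rw [← add_sum_erase _ _ hjc]
      refine (hle j hj).trans (add_le_add_right ?_ _)
      exact hv.sum_le_sum_of_card_eq
        (by rw [card_erase_of_mem hjc, hcard, Fin.card_Ioi]; omega)
        (fun i hi ↦ (mem_Ioi.1 hi).le) (fun i _ hi ↦ by simpa using hi)
    · refine (hgt j hj).trans (hv.sum_le_sum_of_card_eq (by rw [hcard, Fin.card_Ici])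
        (fun i hi ↦ mem_Ici.1 hi) (fun i _ hi ↦ ?_))
      simpa using (not_le.1 (by simpa using hi)).le

theorem IsFeasible.update {n : ℕ} {s v : Fin n → ℝ} {T j : Fin n} {x : ℝ}
    (h : IsFeasible T s v) (hv : Antitone v) (hw : Antitone (Function.update v j x))
    (hjT : j < T) (hx : s j ≤ x + ∑ i ∈ Ioi T, v i) :
    IsFeasible T s (Function.update v j x) := by
  obtain ⟨hle, hgt⟩ := (isFeasible_iff hv T).1 h
  rw [isFeasible_iff hw, sum_update_of_notMem (by simpa using hjT.le),
    sum_update_of_notMem (by simpa using hjT)]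
  refine ⟨fun i hi ↦ ?_, hgt⟩
  rcases eq_or_ne i j with rfl | hij
  · rwa [Function.update_self]
  · rw [Function.update_of_ne hij]
    exact hle i hi

theorem stmt3_general (n t : ℕ) (htn : t + 1 < n)
    (s : Fin n → ℝ)
    (v : Fin n → ℝ) (hv0 : ∀ i, 0 ≤ v i)
    (hvmono : ∀ i j : Fin n, i ≤ j → v j ≤ v i)
    (hfeas : ∀ (j : Fin n) (A : Finset (Fin n)), A.card = t → j ∉ A →
      s j ≤ ∑ i ∈ Aᶜ, v i)
    (hopt : ∀ w : Fin n → ℝ, (∀ i, 0 ≤ w i) →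
      (∀ i j : Fin n, i ≤ j → w j ≤ w i) →
      (∀ (j : Fin n) (A : Finset (Fin n)), A.card = t → j ∉ A →
        s j ≤ ∑ i ∈ Aᶜ, w i) →
      ∑ i, v i ≤ ∑ i, w i) :
    ∀ j k : Fin n, j.val + 1 ≤ t → k.val = j.val + 1 → v k < v j →
      v j + ∑ i ∈ Finset.univ.filter (fun i : Fin n => t + 1 ≤ i.val), v i = s j := by
  intro j k hjt hk hvk
  have hv : Antitone v := fun a b h ↦ hvmono a b h
  let T : Fin n := ⟨t, by omega⟩
  have hjT : j < T := Fin.lt_def.2 (by simp [T]; omega)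
  rw [show univ.filter (fun i : Fin n ↦ t + 1 ≤ i.val) = Ioi T by ext; simp [T, Fin.lt_def]]
  refine le_antisymm (not_lt.1 fun hlt ↦ ?_) (((isFeasible_iff hv T).1 hfeas).1 j hjT.le)
  set x := max (v k) (s j - ∑ i ∈ Ioi T, v i)
  have hxj : x < v j := max_lt hvk (by linarith)
  have hw : Antitone (Function.update v j x) :=
    hv.update_of_le_of_le (k := k) (fun i hi ↦ Fin.le_def.2 (by rw [Fin.lt_def] at hi; omega))
      hxj.le (le_max_left _ _)
  have hw0 : ∀ i, 0 ≤ Function.update v j x i := by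
    intro i
    rcases eq_or_ne i j with rfl | hij
    · rw [Function.update_self]
      exact (hv0 k).trans (le_max_left _ _)
    · simpa [hij] using hv0 i
  have hwfeas : IsFeasible T s (Function.update v j x) :=
    IsFeasible.update hfeas hv hw hjT (by linarith [le_max_right (v k) (s j - ∑ i ∈ Ioi T, v i)])
  have hsum := hopt _ hw0 (fun a b h ↦ hw h) hwfeas
  rw [sum_update_of_mem (mem_univ j), sdiff_singleton_eq_erase,
    ← add_sum_erase univ v (mem_univ j)] at hsum
  linarith

theorem stmt3 (n t : ℕ) (ht : 1 ≤ t) (htn : t + 1 < n)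
    (s : Fin n → ℝ) (hs0 : ∀ i, 0 ≤ s i)
    (hsmono : ∀ i j : Fin n, i ≤ j → s j ≤ s i)
    (v : Fin n → ℝ) (hv0 : ∀ i, 0 ≤ v i)
    (hvmono : ∀ i j : Fin n, i ≤ j → v j ≤ v i)
    (hfeas : ∀ (j : Fin n) (A : Finset (Fin n)), A.card = t → j ∉ A →
      s j ≤ ∑ i ∈ Aᶜ, v i)
    (hopt : ∀ w : Fin n → ℝ, (∀ i, 0 ≤ w i) →
      (∀ i j : Fin n, i ≤ j → w j ≤ w i) →
      (∀ (j : Fin n) (A : Finset (Fin n)), A.card = t → j ∉ A →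
        s j ≤ ∑ i ∈ Aᶜ, w i) →
      ∑ i, v i ≤ ∑ i, w i) :
    ∀ j k : Fin n, j.val + 1 ≤ t → k.val = j.val + 1 → v k < v j →
      v j + ∑ i ∈ Finset.univ.filter (fun i : Fin n => t + 1 ≤ i.val), v i = s j :=
  stmt3_general n t htn s v hv0 hvmono hfeas hopt
end

section
/- Let s : Fin n → ℝ be a fixed nonnegative nonincreasing vector, let 1 ≤ t < n−1, and call a nonnegative vector v : Fin n → ℝ feasible if v j + ∑_{i=t+2}^n v i ≥ s j for all j ≤ t+1 and ∑_{i=t+1}^n v i ≥ s j for all j ≥ t+2. If v is nonnegative, nonincreasing and feasible with v_{t+1} > v_n, then there exists a nonnegative feasible vector v̂ : Fin n → ℝ satisfying ∑_i v̂ i < ∑_i v i. -/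
theorem stmt12 (n t : ℕ) (ht : 1 ≤ t) (htn : t + 1 < n)
    (s : Fin n → ℝ) (hs0 : ∀ i, 0 ≤ s i)
    (hsmono : ∀ i j : Fin n, i ≤ j → s j ≤ s i)
    (v : Fin n → ℝ) (hv0 : ∀ i, 0 ≤ v i)
    (hvmono : ∀ i j : Fin n, i ≤ j → v j ≤ v i)
    (htail : v ⟨t, by omega⟩ > v ⟨n - 1, by omega⟩)
    (hfeas1 : ∀ j : Fin n, j.val ≤ t →
      s j ≤ v j + ∑ i ∈ Finset.univ.filter (fun i : Fin n => t + 1 ≤ i.val), v i)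
    (hfeas2 : ∀ j : Fin n, t + 1 ≤ j.val →
      s j ≤ ∑ i ∈ Finset.univ.filter (fun i : Fin n => t ≤ i.val), v i) :
    ∃ vh : Fin n → ℝ, (∀ i, 0 ≤ vh i) ∧
      (∀ j : Fin n, j.val ≤ t →
        s j ≤ vh j + ∑ i ∈ Finset.univ.filter (fun i : Fin n => t + 1 ≤ i.val), vh i) ∧
      (∀ j : Fin n, t + 1 ≤ j.val →
        s j ≤ ∑ i ∈ Finset.univ.filter (fun i : Fin n => t ≤ i.val), vh i) ∧
      ∑ i, vh i < ∑ i, v i := by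
  classical
  set it : Fin n := ⟨t, by omega⟩ with hit
  set Ft : Finset (Fin n) := Finset.univ.filter (fun i : Fin n => t ≤ i.val) with hFt
  set Ft1 : Finset (Fin n) := Finset.univ.filter (fun i : Fin n => t + 1 ≤ i.val) with hFt1
  have hFtIci : Ft = Finset.Ici it := by
    apply Finset.ext; intro i; simp [hFt, Fin.le_def, hit]
  have hFt1Ici : Ft1 = Finset.Ici it \ {it} := by
    apply Finset.ext; intro i; simp [hFt1, Fin.le_def, Fin.ext_iff, hit]; omega
  have hcardt : Ft.card = n - t := by rw [hFtIci, Fin.card_Ici]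
  have hcardt1 : Ft1.card = n - t - 1 := by
    rw [hFt1Ici, Finset.card_sdiff_of_subset (by simp), Fin.card_Ici]
    simp [hit]
  set m : ℕ := n - t with hm
  have hm2 : 2 ≤ m := by omega
  have hmR : (0:ℝ) < (m:ℝ) := by positivity
  set T : ℝ := ∑ i ∈ Ft1, v i with hT
  have hT0 : 0 ≤ T := Finset.sum_nonneg fun i _ => hv0 i
  have hFtsplit : Ft = insert it Ft1 := by
    ext i; simp [hFt, hFt1, Fin.ext_iff, hit]; omega
  have hitnot : it ∉ Ft1 := by simp [hFt1, hit]
  have hS : ∑ i ∈ Ft, v i = v it + T := by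
    rw [hFtsplit, Finset.sum_insert hitnot]
  -- T < (m-1) * v it
  have hnl : (⟨n - 1, by omega⟩ : Fin n) ∈ Ft1 := by
    simp [hFt1]; omega
  have hTlt : T < ((m:ℝ) - 1) * v it := by
    have := Finset.sum_lt_sum (s := Ft1) (f := v) (g := fun _ => v it)
      (fun i hi => hvmono it i (by simp [hFt1] at hi; simp [Fin.le_def, hit]; omega))
      ⟨⟨n - 1, by omega⟩, hnl, htail⟩
    have heq : ∑ _i ∈ Ft1, v it = ((m:ℝ) - 1) * v it := by
      rw [Finset.sum_const, hcardt1, nsmul_eq_mul, Nat.cast_sub (by omega : 1 ≤ m)]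
      norm_num
    linarith [this, heq.symm.le]
  set ε : ℝ := (((m:ℝ) - 1) * v it - T) / m with hε
  have hε0 : 0 < ε := by
    apply div_pos (by linarith) hmR
  have hvt0 : 0 < v it := lt_of_le_of_lt (hv0 _) htail
  set δ : ℝ := min ε (v it) with hδ
  have hδ0 : 0 < δ := lt_min hε0 hvt0
  set A : ℝ := (v it + T) / m with hA
  have hA0 : 0 ≤ A := by positivity
  set vh : Fin n → ℝ := fun i => if i.val < t then v i - δ else A with hvh
  have hsumA1 : ∑ i ∈ Ft1, vh i = T + ε := by
    have : ∀ i ∈ Ft1, vh i = A := by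
      intro i hi; simp [hFt1] at hi; simp [hvh]; omega
    rw [Finset.sum_congr rfl this, Finset.sum_const, hcardt1, nsmul_eq_mul,
      Nat.cast_sub (by omega : 1 ≤ m), Nat.cast_one, hA, hε]
    field_simp
    ring
  have hsumA : ∑ i ∈ Ft, vh i = v it + T := by
    rw [hFtsplit, Finset.sum_insert hitnot, hsumA1]
    have : vh it = A := by simp [hvh, hit]
    rw [this, hA, hε]
    field_simp
    ring
  refine ⟨vh, ?_, ?_, ?_, ?_⟩
  · intro i
    by_cases h : i.val < t
    · simp only [hvh, if_pos h]
      have : v it ≤ v i := hvmono i it (by simp [Fin.le_def, hit]; omega)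
      have : δ ≤ v it := min_le_right _ _
      linarith [hvmono i it (show i ≤ it by simp [Fin.le_def, hit]; omega), min_le_right ε (v it)]
    · simpa [hvh, if_neg h] using hA0
  · intro j hj
    rw [hsumA1]
    by_cases h : j.val < t
    · have h1 := hfeas1 j hj
      simp only [hvh, if_pos h]
      have : δ ≤ ε := min_le_left _ _
      linarith
    · have hjt : j = it := by
        apply Fin.ext; simp [hit]; omega
      have h1 := hfeas1 j hj
      simp only [hvh, if_neg h]
      have hAe : A + (T + ε) = v it + T := by rw [hA, hε]; field_simp; ring
      rw [hjt] at h1 ⊢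
      linarith
  · intro j hj
    rw [hsumA]
    have h2 := hfeas2 j hj
    rw [hS] at h2
    exact h2
  · have key : ∀ f : Fin n → ℝ, ∑ i, f i
        = ∑ i ∈ Finset.univ.filter (fun i : Fin n => i.val < t), f i + ∑ i ∈ Ft, f i := by
      intro f
      rw [← Finset.sum_filter_add_sum_filter_not Finset.univ (fun i : Fin n => i.val < t) f]
      congr 1
      apply Finset.sum_congr _ (fun _ _ => rfl)
      ext i; simp [hFt]
    have hcardlt : (Finset.univ.filter (fun i : Fin n => i.val < t)).card = t := by
      have : Finset.univ.filter (fun i : Fin n => i.val < t) = Finset.Iio it := by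
        ext i; simp [Fin.lt_def, hit]
      rw [this, Fin.card_Iio]
    have hsum1 : ∑ i, vh i = (∑ i ∈ Finset.univ.filter (fun i : Fin n => i.val < t), v i)
        - t * δ + (v it + T) := by
      rw [key vh, hsumA]
      have : ∑ i ∈ Finset.univ.filter (fun i : Fin n => i.val < t), vh i
          = ∑ i ∈ Finset.univ.filter (fun i : Fin n => i.val < t), (v i - δ) := by
        apply Finset.sum_congr rfl
        intro i hi
        simp at hi
        simp [hvh, hi]
      rw [this, Finset.sum_sub_distrib, Finset.sum_const, hcardlt, nsmul_eq_mul]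
    have hsum2 : ∑ i, v i = (∑ i ∈ Finset.univ.filter (fun i : Fin n => i.val < t), v i)
        + (v it + T) := by
      rw [key v, hS]
    rw [hsum1, hsum2]
    have : (0:ℝ) < t * δ := by
      apply mul_pos _ hδ0
      exact_mod_cast (by omega : 0 < t)
    linarith
end
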